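/- Fix a nonzero v ∈ ℝⁿ and define f(A) = log(Av·v) on the set of symmetric positive-definite n×n matrices. Then f is 1-Lipschitz with respect to the metric dist(A,B) = ‖log(A^{-1/2} B A^{-1/2})‖_HS: for all positive-definite A, B, |log(Av·v) - log(Bv·v)| ≤ dist(A,B). -/

import Mathlib

/-! Conjugating by `S = A^{1/2}` and `R = A^{-1/2}` turns the two quadratic forms into
`w ⬝ᵥ w` and `C w ⬝ᵥ w` with `w = S v` and `C = R B R`. In an orthonormal eigenbasis of `C`
these are `∑ cᵢ²` and `∑ μᵢ cᵢ²`, so their ratio lies in `[min μᵢ, max μᵢ]` and the difference of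
the logarithms is at most `maxᵢ |log μᵢ| ≤ ‖log C‖_HS`. -/

open Matrix Real

noncomputable def matFun {n : ℕ} (f : ℝ → ℝ) (A : Matrix (Fin n) (Fin n) ℝ) :
    Matrix (Fin n) (Fin n) ℝ :=
  if hA : A.IsHermitian then
    (hA.eigenvectorUnitary : Matrix (Fin n) (Fin n) ℝ) *
      Matrix.diagonal (fun i => f (hA.eigenvalues i)) *
      (star (hA.eigenvectorUnitary : Matrix (Fin n) (Fin n) ℝ))
  else 0

/-- The logarithm of a positive-definite matrix, defined spectrally. -/
noncomputable def matLog {n : ℕ} (A : Matrix (Fin n) (Fin n) ℝ) :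
    Matrix (Fin n) (Fin n) ℝ := matFun Real.log A

/-- The positive square root of a positive-definite matrix, defined spectrally. -/
noncomputable def matSqrt {n : ℕ} (A : Matrix (Fin n) (Fin n) ℝ) :
    Matrix (Fin n) (Fin n) ℝ := matFun Real.sqrt A

/-- `A^{-1/2}` for a positive-definite matrix, defined spectrally. -/
noncomputable def matSqrtInv {n : ℕ} (A : Matrix (Fin n) (Fin n) ℝ) :
    Matrix (Fin n) (Fin n) ℝ := matFun (fun t => (Real.sqrt t)⁻¹) A

/-- The Hilbert–Schmidt (Frobenius) norm of a real square matrix. -/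
noncomputable def hsNorm {n : ℕ} (T : Matrix (Fin n) (Fin n) ℝ) : ℝ :=
  Real.sqrt ((Tᵀ * T).trace)

/-- `dist(A,B) = ‖log (A^{-1/2} B A^{-1/2})‖_HS`. -/
noncomputable def pdist {n : ℕ} (A B : Matrix (Fin n) (Fin n) ℝ) : ℝ :=
  hsNorm (matLog (matSqrtInv A * B * matSqrtInv A))

lemma abs_log_sub_log_le {x y M : ℝ} (hy : 0 < y) (hlo : exp (-M) * y ≤ x)
    (hhi : x ≤ exp M * y) : |log x - log y| ≤ M := by
  have hx : 0 < x := (mul_pos (exp_pos _) hy).trans_le hlo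
  have hup := log_le_log hx hhi
  have hdown := log_le_log (mul_pos (exp_pos _) hy) hlo
  rw [log_mul (exp_pos _).ne' hy.ne', log_exp] at hup hdown
  exact abs_sub_le_iff.2 ⟨by linarith, by linarith⟩

lemma transpose_mul_mul_mulVec_dotProduct {m : Type*} [Fintype m] {R : Type*} [CommSemiring R]
    (M B : Matrix m m R) (x : m → R) :
    ((Mᵀ * B * M) *ᵥ x) ⬝ᵥ x = (B *ᵥ (M *ᵥ x)) ⬝ᵥ (M *ᵥ x) := by
  rw [← mulVec_mulVec, ← mulVec_mulVec, dotProduct_comm, dotProduct_mulVec, ← mulVec_transpose,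
    transpose_transpose, dotProduct_comm]

section MatFun

variable {n : ℕ} {A : Matrix (Fin n) (Fin n) ℝ}

lemma matFun_of_isHermitian (hA : A.IsHermitian) (f : ℝ → ℝ) :
    matFun f A = (hA.eigenvectorUnitary : Matrix (Fin n) (Fin n) ℝ) *
      diagonal (fun i => f (hA.eigenvalues i)) *
      (hA.eigenvectorUnitary : Matrix (Fin n) (Fin n) ℝ)ᵀ := by
  rw [matFun, dif_pos hA, star_eq_conjTranspose, conjTranspose_eq_transpose_of_trivial]

lemma transpose_eigenvectorUnitary_mul_self (hA : A.IsHermitian) :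
    (hA.eigenvectorUnitary : Matrix (Fin n) (Fin n) ℝ)ᵀ *
      (hA.eigenvectorUnitary : Matrix (Fin n) (Fin n) ℝ) = 1 := by
  rw [← conjTranspose_eq_transpose_of_trivial, ← star_eq_conjTranspose]
  exact Unitary.coe_star_mul_self _

lemma eigenvectorUnitary_mul_transpose_self (hA : A.IsHermitian) :
    (hA.eigenvectorUnitary : Matrix (Fin n) (Fin n) ℝ) *
      (hA.eigenvectorUnitary : Matrix (Fin n) (Fin n) ℝ)ᵀ = 1 := by
  rw [← conjTranspose_eq_transpose_of_trivial, ← star_eq_conjTranspose]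
  exact Unitary.coe_mul_star_self _

lemma matFun_mul (hA : A.IsHermitian) (f g : ℝ → ℝ) :
    matFun f A * matFun g A = matFun (fun t => f t * g t) A := by
  simp only [matFun_of_isHermitian hA, Matrix.mul_assoc]
  rw [← Matrix.mul_assoc _ _ (diagonal _ * _), transpose_eigenvectorUnitary_mul_self,
    Matrix.one_mul, ← Matrix.mul_assoc (diagonal _), diagonal_mul_diagonal]

lemma matFun_congr (hA : A.IsHermitian) {f g : ℝ → ℝ}
    (h : ∀ i, f (hA.eigenvalues i) = g (hA.eigenvalues i)) : matFun f A = matFun g A := by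
  simp only [matFun_of_isHermitian hA, h]

lemma matFun_id (hA : A.IsHermitian) : matFun id A = A := by
  rw [matFun, dif_pos hA]
  simpa using hA.spectral_theorem.symm

lemma matFun_eq_one (hA : A.IsHermitian) {f : ℝ → ℝ} (h : ∀ i, f (hA.eigenvalues i) = 1) :
    matFun f A = 1 := by
  rw [matFun_of_isHermitian hA, funext h, diagonal_one, Matrix.mul_one,
    eigenvectorUnitary_mul_transpose_self]

lemma transpose_matFun (f : ℝ → ℝ) (A : Matrix (Fin n) (Fin n) ℝ) :
    (matFun f A)ᵀ = matFun f A := by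
  by_cases hA : A.IsHermitian
  · rw [matFun_of_isHermitian hA, transpose_mul, transpose_mul, transpose_transpose,
      diagonal_transpose, Matrix.mul_assoc]
  · rw [matFun, dif_neg hA, transpose_zero]

lemma matFun_mulVec_dotProduct (hA : A.IsHermitian) (f : ℝ → ℝ) (w : Fin n → ℝ) :
    (matFun f A *ᵥ w) ⬝ᵥ w = ∑ i, f (hA.eigenvalues i) *
      ((hA.eigenvectorUnitary : Matrix (Fin n) (Fin n) ℝ)ᵀ *ᵥ w) i ^ 2 := by
  have h := transpose_mul_mul_mulVec_dotProduct
    (hA.eigenvectorUnitary : Matrix (Fin n) (Fin n) ℝ)ᵀ (diagonal fun i => f (hA.eigenvalues i)) w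
  rw [transpose_transpose] at h
  rw [matFun_of_isHermitian hA, h]
  simp only [mulVec_diagonal, dotProduct]
  exact Finset.sum_congr rfl fun i _ => by ring

lemma hsNorm_matFun (hA : A.IsHermitian) (f : ℝ → ℝ) :
    hsNorm (matFun f A) = √(∑ i, f (hA.eigenvalues i) ^ 2) := by
  rw [hsNorm, transpose_matFun, matFun_mul hA, matFun_of_isHermitian hA, trace_mul_cycle,
    transpose_eigenvectorUnitary_mul_self, Matrix.one_mul, trace_diagonal]
  simp only [sq]

lemma abs_apply_eigenvalue_le_hsNorm_matFun (hA : A.IsHermitian) (f : ℝ → ℝ) (i : Fin n) :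
    |f (hA.eigenvalues i)| ≤ hsNorm (matFun f A) := by
  rw [hsNorm_matFun hA, ← sqrt_sq_eq_abs]
  exact sqrt_le_sqrt (Finset.single_le_sum (fun j _ => sq_nonneg (f (hA.eigenvalues j)))
    (Finset.mem_univ i))

end MatFun

lemma abs_log_mulVec_dotProduct_sub_log_dotProduct_le {n : ℕ} {C : Matrix (Fin n) (Fin n) ℝ}
    (hC : C.PosDef) {w : Fin n → ℝ} (hw : w ≠ 0) :
    |log ((C *ᵥ w) ⬝ᵥ w) - log (w ⬝ᵥ w)| ≤ hsNorm (matLog C) := by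
  set M := hsNorm (matLog C)
  set c := (hC.1.eigenvectorUnitary : Matrix (Fin n) (Fin n) ℝ)ᵀ *ᵥ w
  have hμ : ∀ i, exp (-M) ≤ hC.1.eigenvalues i ∧ hC.1.eigenvalues i ≤ exp M := fun i => by
    have hlog := abs_le.1 (abs_apply_eigenvalue_le_hsNorm_matFun hC.1 log i)
    rw [← exp_log (hC.eigenvalues_pos i)]
    exact ⟨exp_le_exp.2 hlog.1, exp_le_exp.2 hlog.2⟩
  have hww : w ⬝ᵥ w = ∑ i, c i ^ 2 := by
    simpa [matFun_eq_one hC.1 (f := fun _ => 1) fun _ => rfl] using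
      matFun_mulVec_dotProduct hC.1 (fun _ => 1) w
  have hCw : (C *ᵥ w) ⬝ᵥ w = ∑ i, hC.1.eigenvalues i * c i ^ 2 := by
    simpa [matFun_id hC.1] using matFun_mulVec_dotProduct hC.1 id w
  refine abs_log_sub_log_le (by simpa using dotProduct_star_self_pos_iff.2 hw) ?_ ?_
  · rw [hCw, hww, Finset.mul_sum]
    gcongr with i
    exact (hμ i).1
  · rw [hCw, hww, Finset.mul_sum]
    gcongr with i
    exact (hμ i).2

section Sqrt

variable {n : ℕ} {A : Matrix (Fin n) (Fin n) ℝ}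

lemma matSqrt_mul_matSqrtInv (hA : A.PosDef) : matSqrt A * matSqrtInv A = 1 := by
  rw [matSqrt, matSqrtInv, matFun_mul hA.1]
  exact matFun_eq_one hA.1 fun i => mul_inv_cancel₀ (sqrt_pos.2 (hA.eigenvalues_pos i)).ne'

lemma matSqrtInv_mul_matSqrt (hA : A.PosDef) : matSqrtInv A * matSqrt A = 1 := by
  rw [matSqrt, matSqrtInv, matFun_mul hA.1]
  exact matFun_eq_one hA.1 fun i => inv_mul_cancel₀ (sqrt_pos.2 (hA.eigenvalues_pos i)).ne'

lemma matSqrt_mul_self (hA : A.PosDef) : matSqrt A * matSqrt A = A := by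
  rw [matSqrt, matFun_mul hA.1,
    matFun_congr hA.1 (g := id) fun i => mul_self_sqrt (hA.eigenvalues_pos i).le, matFun_id hA.1]

end Sqrt

theorem stmt11 {n : ℕ} (v : Fin n → ℝ) (hv : v ≠ 0)
    (A B : Matrix (Fin n) (Fin n) ℝ) (hA : A.PosDef) (hB : B.PosDef) :
    |Real.log ((A *ᵥ v) ⬝ᵥ v) - Real.log ((B *ᵥ v) ⬝ᵥ v)| ≤ pdist A B := by
  set S := matSqrt A
  set R := matSqrtInv A
  have hRS : R * S = 1 := matSqrtInv_mul_matSqrt hA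
  have hSR : S * R = 1 := matSqrt_mul_matSqrtInv hA
  have hSt : Sᵀ = S := transpose_matFun _ A
  have hRt : Rᵀ = R := transpose_matFun _ A
  have hR_inj : Function.Injective R.mulVec := fun x y h => by
    simpa [mulVec_mulVec, hSR] using congrArg (S *ᵥ ·) h
  have hC : (R * B * R).PosDef := by
    have h := hB.conjTranspose_mul_mul_same hR_inj
    rwa [conjTranspose_eq_transpose_of_trivial, hRt] at h
  have hw : S *ᵥ v ≠ 0 := fun h => hv <| by
    simpa [mulVec_mulVec, hRS] using congrArg (R *ᵥ ·) h
  have hAv : (A *ᵥ v) ⬝ᵥ v = (S *ᵥ v) ⬝ᵥ (S *ᵥ v) := by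
    have h := transpose_mul_mul_mulVec_dotProduct S 1 v
    rw [hSt, Matrix.mul_one, one_mulVec] at h
    rw [← h, matSqrt_mul_self hA]
  have hBv : ((R * B * R) *ᵥ (S *ᵥ v)) ⬝ᵥ (S *ᵥ v) = (B *ᵥ v) ⬝ᵥ v := by
    have h := transpose_mul_mul_mulVec_dotProduct R B (S *ᵥ v)
    rwa [hRt, mulVec_mulVec v R S, hRS, one_mulVec] at h
  rw [abs_sub_comm, hAv, ← hBv]
  exact abs_log_mulVec_dotProduct_sub_log_dotProduct_le hC hw
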